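/- Let a ∈ 𝔹_n with |a| > 19/20, and set ã = (1 − 20(1−|a|))·a/|a|. Then the union over z ∈ 𝒯_a of the Bergman metric balls D(z,1) is contained in 𝒯_ã; that is, for every z ∈ 𝒯_a and every u ∈ 𝔹_n with ρ(z,u) < tanh 1, one has |1 − ⟨u, ã/|ã|⟩| < 1 − |ã| = 20(1−|a|). -/

import Mathlib

open MeasureTheory Filter
open scoped ENNReal Topology

noncomputable section

/-- `ℂⁿ` with its Euclidean (Hermitian) structure. -/
abbrev Cn (n : ℕ) := EuclideanSpace ℂ (Fin n)

instance (n : ℕ) : MeasurableSpace (Cn n) := WithLp.measurableSpace 2 (Fin n → ℂ)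
instance (n : ℕ) : BorelSpace (Cn n) := PiLp.borelSpace 2 (X := fun _ : Fin n => ℂ)
instance (n : ℕ) : InnerProductSpace ℝ (Cn n) := InnerProductSpace.rclikeToReal ℂ (Cn n)

/-- The Hermitian inner product `⟨u,z⟩ = ∑ⱼ uⱼ conj(zⱼ)`. -/
def pInner {n : ℕ} (u z : Cn n) : ℂ := ∑ j, u j * (starRingEnd ℂ) (z j)

/-- The axis-parallel cube of side length `r` centered at `z`. -/
def cube {n : ℕ} (r : ℝ) (z : Cn n) : Set (Cn n) :=
  {u | ∀ j, |(u j - z j).re| < r / 2 ∧ |(u j - z j).im| < r / 2}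

/-- A weight on `ℂⁿ`: nonnegative and locally integrable. -/
def IsWeight {n : ℕ} (w : Cn n → ℝ) : Prop :=
  (∀ z, 0 ≤ w z) ∧ LocallyIntegrable w volume

/-- `w(E) = ∫_E w dv`, as an extended nonnegative real. -/
def wMeas {n : ℕ} (w : Cn n → ℝ) (E : Set (Cn n)) : ℝ≥0∞ :=
  ∫⁻ u in E, ENNReal.ofReal (w u)

/-- Average of a nonnegative function over the cube `Q_r(z)`. -/
def cubeAvg {n : ℕ} (r : ℝ) (z : Cn n) (g : Cn n → ℝ) : ℝ≥0∞ :=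
  (volume (cube r z))⁻¹ * ∫⁻ u in cube r z, ENNReal.ofReal (g u)

/-- The norm of the weighted space `L^p_{α,w}`:
`‖f‖ = (∫ |f(z)|^p e^{-pα|z|²/2} w(z) dv(z))^{1/p}`. -/
def wNorm {n : ℕ} (α p : ℝ) (w : Cn n → ℝ) (f : Cn n → ℂ) : ℝ≥0∞ :=
  (∫⁻ z, ENNReal.ofReal ‖f z‖ ^ p *
    ENNReal.ofReal (Real.exp (-(p * α / 2) * ‖z‖ ^ 2) * w z)) ^ (1 / p)

/-- Membership in `L^p_{α,w}`. -/
def MemLpw {n : ℕ} (α p : ℝ) (w : Cn n → ℝ) (f : Cn n → ℂ) : Prop :=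
  AEStronglyMeasurable f volume ∧ wNorm α p w f < ⊤

/-- Membership in the weighted Fock space `F^p_{α,w}`: entire with finite norm. -/
def MemFock {n : ℕ} (α p : ℝ) (w : Cn n → ℝ) (f : Cn n → ℂ) : Prop :=
  Differentiable ℂ f ∧ wNorm α p w f < ⊤

/-- The restricted `A_p` characteristic `[w]_{A_{p,r}}` (for `1 < p < ∞`),
with `p' = p/(p-1)` the conjugate exponent. -/
def apCharacteristic {n : ℕ} (p r : ℝ) (w : Cn n → ℝ) : ℝ≥0∞ :=
  ⨆ z : Cn n,
    cubeAvg r z w * (cubeAvg r z fun u => w u ^ (-((p / (p - 1)) / p))) ^ (p / (p / (p - 1)))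

/-- The restricted `A_p` class (`1 < p < ∞`). -/
def ResAp {n : ℕ} (p : ℝ) (w : Cn n → ℝ) : Prop :=
  ∀ r > 0, apCharacteristic p r w < ⊤

/-- `w` is `r`-doubling with constant `C₀`. -/
def IsDoublingWith {n : ℕ} (r : ℝ) (w : Cn n → ℝ) (C₀ : ℝ) : Prop :=
  1 ≤ C₀ ∧ ∀ z : Cn n, wMeas w (cube (2 * r) z) ≤ ENNReal.ofReal C₀ * wMeas w (cube r z)

/-- `w` is `r`-doubling. -/
def IsDoubling {n : ℕ} (r : ℝ) (w : Cn n → ℝ) : Prop := ∃ C₀, IsDoublingWith r w C₀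

/-- The Fock reproducing kernel `K_z(u) = e^{α⟨u,z⟩}`. -/
def Kz {n : ℕ} (α : ℝ) (z : Cn n) : Cn n → ℂ := fun u => Complex.exp (α * pInner u z)

/-- The normalized reproducing kernel `k_z(u) = e^{α⟨u,z⟩ - α|z|²/2}`. -/
def kz {n : ℕ} (α : ℝ) (z : Cn n) : Cn n → ℂ :=
  fun u => Complex.exp (α * pInner u z - α * ‖z‖ ^ 2 / 2)

/-- The pairing `⟨f,g⟩_α = ∫ f conj(g) dλ_α`. -/
def pairing {n : ℕ} (α : ℝ) (f g : Cn n → ℂ) : ℂ :=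
  (α / Real.pi) ^ n * ∫ u, f u * (starRingEnd ℂ) (g u) * Real.exp (-α * ‖u‖ ^ 2)

/-- The Fock projection `P_α f(z) = (α/π)^n ∫ f(u) e^{α⟨z,u⟩ - α|u|²} dv(u)`. -/
def fockProj {n : ℕ} (α : ℝ) (f : Cn n → ℂ) (z : Cn n) : ℂ :=
  (α / Real.pi) ^ n * ∫ u, f u * Complex.exp (α * pInner z u - α * ‖u‖ ^ 2)

/-- The Toeplitz operator `T_φ f(z) = (α/π)^n ∫ φ(u) f(u) e^{α⟨z,u⟩ - α|u|²} dv(u)`. -/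
def toeplitz {n : ℕ} (α : ℝ) (φ f : Cn n → ℂ) (z : Cn n) : ℂ :=
  (α / Real.pi) ^ n * ∫ u, φ u * f u * Complex.exp (α * pInner z u - α * ‖u‖ ^ 2)

/-- The `(p,w)`-normalized reproducing kernel `k_z^{(p,w)} = K_z / ‖K_z‖_{F^p_{α,w}}`. -/
def kpw {n : ℕ} (α p : ℝ) (w : Cn n → ℝ) (z : Cn n) : Cn n → ℂ :=
  fun u => Kz α z u / ((wNorm α p w (Kz α z)).toReal : ℂ)

/-- The dual weight `w' = w^{-p'/p}`. -/
def dualWeight {n : ℕ} (p : ℝ) (w : Cn n → ℝ) : Cn n → ℝ :=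
  fun u => w u ^ (-((p / (p - 1)) / p))

/-- `|⟨T k_z^{(p,w)}, k_u^{(p',w')}⟩_α|` as an extended nonnegative real. -/
def wlKernel {n : ℕ} (α p : ℝ) (w : Cn n → ℝ) (T : (Cn n → ℂ) → Cn n → ℂ)
    (z u : Cn n) : ℝ≥0∞ :=
  ENNReal.ofReal ‖pairing α (T (kpw α p w z)) (kpw α (p / (p - 1)) (dualWeight p w) u)‖

/-- `T` maps `F^p_{α,w}` into itself and is bounded there with constant `C`. -/
def FockBoundedWith {n : ℕ} (α p : ℝ) (w : Cn n → ℝ)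
    (T : (Cn n → ℂ) → Cn n → ℂ) (C : ℝ) : Prop :=
  ∀ f, MemFock α p w f →
    MemFock α p w (T f) ∧ wNorm α p w (T f) ≤ ENNReal.ofReal C * wNorm α p w f

/-- `T` is a bounded operator on `F^p_{α,w}`. -/
def FockBounded {n : ℕ} (α p : ℝ) (w : Cn n → ℝ) (T : (Cn n → ℂ) → Cn n → ℂ) : Prop :=
  ∃ C > 0, FockBoundedWith α p w T C

/-- `T` is weakly localized on `F^p_{α,w}`. -/
def WeaklyLocalized {n : ℕ} (α p : ℝ) (w : Cn n → ℝ)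
    (T : (Cn n → ℂ) → Cn n → ℂ) : Prop :=
  FockBounded α p w T ∧
  (⨆ z : Cn n, ∫⁻ u, wlKernel α p w T z u) < ⊤ ∧
  (⨆ u : Cn n, ∫⁻ z, wlKernel α p w T z u) < ⊤ ∧
  Tendsto (fun r : ℝ => ⨆ z : Cn n, ∫⁻ u in (Metric.ball z r)ᶜ, wlKernel α p w T z u)
    atTop (𝓝 0) ∧
  Tendsto (fun r : ℝ => ⨆ u : Cn n, ∫⁻ z in (Metric.ball u r)ᶜ, wlKernel α p w T z u)
    atTop (𝓝 0)

/-- A set of functions is totally bounded with respect to the pseudometric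
`d(f,g) = ‖f - g‖_{L^p_{α,w}}`. -/
def TotallyBddW {n : ℕ} (α p : ℝ) (w : Cn n → ℝ) (S : Set (Cn n → ℂ)) : Prop :=
  ∀ ε > (0 : ℝ), ∃ G : Set (Cn n → ℂ), G.Finite ∧
    ∀ f ∈ S, ∃ g ∈ G, wNorm α p w (f - g) < ENNReal.ofReal ε

/-- `T` is a compact operator on `F^p_{α,w}`: the image of the closed unit ball is
totally bounded. -/
def FockCompact {n : ℕ} (α p : ℝ) (w : Cn n → ℝ) (T : (Cn n → ℂ) → Cn n → ℂ) : Prop :=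
  TotallyBddW α p w {h | ∃ f, MemFock α p w f ∧ wNorm α p w f ≤ 1 ∧ h = T f}

/-- `ŵ(z) = w(Q_1(z))`. -/
def hatW {n : ℕ} (w : Cn n → ℝ) (z : Cn n) : ℝ := (wMeas w (cube 1 z)).toReal

/-- The Berezin transform `T̃(z) = ⟨T k_z, k_z⟩_α`. -/
def berezin {n : ℕ} (α : ℝ) (T : (Cn n → ℂ) → Cn n → ℂ) (z : Cn n) : ℂ :=
  pairing α (T (kz α z)) (kz α z)

/-- Iterated product of Toeplitz operators over a list of symbols. -/
def toeplitzList {n : ℕ} (α : ℝ) : List (Cn n → ℂ) → (Cn n → ℂ) → Cn n → ℂ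
  | [], f => f
  | φ :: rest, f => toeplitz α φ (toeplitzList α rest f)

/-- The joint `A_{p,r}` characteristic `[w,σ]_{A_{p,r}}` (for `p = 1` via the essential
supremum of `σ⁻¹`, for `p > 1` via the dual exponent `p' = p/(p-1)`). -/
def jointAp {n : ℕ} (p r : ℝ) (w σ : Cn n → ℝ) : ℝ≥0∞ :=
  if p = 1 then
    ⨆ z : Cn n, cubeAvg r z w *
      essSup (fun u => (ENNReal.ofReal (σ u))⁻¹) (volume.restrict (cube r z))
  else
    ⨆ z : Cn n, cubeAvg r z w *
      (cubeAvg r z fun u => σ u ^ (-((p / (p - 1)) / p))) ^ (p / (p / (p - 1)))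

/-- `P_α : L^p_{α,σ} → L^p_{α,w}` is bounded with constant `B`: for every
`f ∈ L^p_{α,σ}` the defining integral converges absolutely for a.e. `z` and
`‖P_α f‖_{L^p_{α,w}} ≤ B ‖f‖_{L^p_{α,σ}}`. -/
def FockProjBoundedWith {n : ℕ} (α p : ℝ) (σ w : Cn n → ℝ) (B : ℝ) : Prop :=
  ∀ f, MemLpw α p σ f →
    (∀ᵐ z : Cn n, Integrable (fun u => f u * Complex.exp (α * pInner z u - α * ‖u‖ ^ 2))) ∧
    wNorm α p w (fockProj α f) ≤ ENNReal.ofReal B * wNorm α p σ f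

/-- `T_φ` is bounded on `L^p_{α,w}` with constant `C`: for every `f ∈ L^p_{α,w}` the
defining integral converges absolutely for a.e. `z` and the norm inequality holds. -/
def ToeplitzBoundedWith {n : ℕ} (α p : ℝ) (w : Cn n → ℝ) (φ : Cn n → ℂ) (C : ℝ) : Prop :=
  ∀ f, MemLpw α p w f →
    (∀ᵐ z : Cn n,
      Integrable (fun u => φ u * f u * Complex.exp (α * pInner z u - α * ‖u‖ ^ 2))) ∧
    wNorm α p w (toeplitz α φ f) ≤ ENNReal.ofReal C * wNorm α p w f

/-- The rank-one operator `T_φ^{(u,r)} f = χ_{Q_r(u)} k_u ∫_{Q_r(u)} φ f conj(k_u) dλ_α`. -/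
def toeplitzCut {n : ℕ} (α r : ℝ) (u : Cn n) (φ f : Cn n → ℂ) : Cn n → ℂ := fun z =>
  (cube r u).indicator (kz α u) z *
    ∫ ξ in cube r u,
      φ ξ * f ξ * (starRingEnd ℂ) (kz α u ξ) * ((α / Real.pi) ^ n * Real.exp (-α * ‖ξ‖ ^ 2))

open scoped Classical

/-- The open unit ball `𝔹_n` of `ℂⁿ`. -/
def unitBall (n : ℕ) : Set (Cn n) := Metric.ball 0 1

/-- A weight on `𝔹_n`: nonnegative on the ball and locally integrable there. -/
def IsWeightOn {n : ℕ} (σ : Cn n → ℝ) : Prop :=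
  (∀ z ∈ unitBall n, 0 ≤ σ z) ∧ LocallyIntegrableOn σ (unitBall n) volume

/-- The Carleson tent `𝒯_a`. -/
def tent {n : ℕ} (a : Cn n) : Set (Cn n) :=
  if a = 0 then unitBall n
  else {z ∈ unitBall n | ‖1 - pInner z ((‖a‖ : ℂ)⁻¹ • a)‖ < 1 - ‖a‖}

/-- Average of a nonnegative function over the tent `𝒯_a`. -/
def tentAvg {n : ℕ} (a : Cn n) (g : Cn n → ℝ) : ℝ≥0∞ :=
  (volume (tent a))⁻¹ * ∫⁻ z in tent a, ENNReal.ofReal (g z)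

/-- The Békollè–Bonami characteristic `[σ]_{B_p}`, with `p' = p/(p-1)`. -/
def bpCharacteristic {n : ℕ} (p : ℝ) (σ : Cn n → ℝ) : ℝ≥0∞ :=
  ⨆ a ∈ unitBall n,
    tentAvg a σ * (tentAvg a fun z => σ z ^ (-((p / (p - 1)) / p))) ^ (p / (p / (p - 1)))

/-- The Békollè–Bonami class `B_p`. -/
def IsBp {n : ℕ} (p : ℝ) (σ : Cn n → ℝ) : Prop := bpCharacteristic p σ < ⊤

/-- The pseudo-hyperbolic distance on `𝔹_n`. -/
def pseudoDist {n : ℕ} (z u : Cn n) : ℝ :=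
  Real.sqrt (1 - (1 - ‖z‖ ^ 2) * (1 - ‖u‖ ^ 2) / ‖1 - pInner u z‖ ^ 2)

/-- The Bergman metric ball `D(z,δ)`. -/
def bergmanBall {n : ℕ} (z : Cn n) (δ : ℝ) : Set (Cn n) :=
  {u ∈ unitBall n | pseudoDist z u < Real.tanh δ}

/-- `σ̂(z) = σ(D(z,1)) / v(D(z,1))`. -/
def hatSigma {n : ℕ} (σ : Cn n → ℝ) (z : Cn n) : ℝ :=
  (∫⁻ u in bergmanBall z 1, ENNReal.ofReal (σ u)).toReal / (volume (bergmanBall z 1)).toReal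

/-- The `C_p` class of weights on `𝔹_n`. -/
def IsCp {n : ℕ} (p : ℝ) (σ : Cn n → ℝ) : Prop :=
  ∃ M : ℝ, ∀ a ∈ unitBall n,
    ((volume (bergmanBall a 1))⁻¹ * ∫⁻ z in bergmanBall a 1, ENNReal.ofReal (σ z)) *
      ((volume (bergmanBall a 1))⁻¹ *
        ∫⁻ z in bergmanBall a 1, ENNReal.ofReal (σ z ^ (-((p / (p - 1)) / p)))) ^
        (p / (p / (p - 1))) ≤ ENNReal.ofReal M

/-- The norm of the weighted Bergman space `L^p_σ`. -/
def bNorm {n : ℕ} (p : ℝ) (σ : Cn n → ℝ) (f : Cn n → ℂ) : ℝ≥0∞ :=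
  (∫⁻ z in unitBall n, ENNReal.ofReal ‖f z‖ ^ p * ENNReal.ofReal (σ z)) ^ (1 / p)

/-- Membership in the weighted Bergman space `A^p_σ`. -/
def MemBergman {n : ℕ} (p : ℝ) (σ : Cn n → ℝ) (f : Cn n → ℂ) : Prop :=
  DifferentiableOn ℂ f (unitBall n) ∧ bNorm p σ f < ⊤

/-- The Bergman–Toeplitz operator `T_φ f(z) = ∫_{𝔹_n} φ(u) f(u) (1-⟨z,u⟩)^{-(n+1)} dṽ(u)`. -/
def bergToeplitz {n : ℕ} (φ f : Cn n → ℂ) (z : Cn n) : ℂ :=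
  ((volume (unitBall n)).toReal)⁻¹ *
    ∫ u in unitBall n, φ u * f u * ((1 - pInner z u) ^ (n + 1))⁻¹

/-- The Berezin transform of the Bergman–Toeplitz operator `T_φ`. -/
def bergBerezin {n : ℕ} (φ : Cn n → ℂ) (z : Cn n) : ℂ :=
  (((1 - ‖z‖ ^ 2) ^ (n + 1) : ℝ) : ℂ) * (((volume (unitBall n)).toReal)⁻¹ : ℝ) *
    ∫ u in unitBall n, φ u * ((‖1 - pInner u z‖ ^ (2 * (n + 1)) : ℝ) : ℂ)⁻¹

/-- Total boundedness with respect to the pseudometric `d(f,g) = ‖f-g‖_{L^p_σ}`. -/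
def TotallyBddB {n : ℕ} (p : ℝ) (σ : Cn n → ℝ) (S : Set (Cn n → ℂ)) : Prop :=
  ∀ ε > (0 : ℝ), ∃ G : Set (Cn n → ℂ), G.Finite ∧
    ∀ f ∈ S, ∃ g ∈ G, bNorm p σ (f - g) < ENNReal.ofReal ε
local notation "⟪" x ", " y "⟫" => @inner ℂ _ _ x y

lemma pInner_eq_inner' {n : ℕ} (u z : Cn n) : pInner u z = ⟪z, u⟫ := by
  simp [pInner, PiLp.inner_apply, mul_comm, RCLike.inner_apply]

lemma tanh_one_lt : Real.tanh 1 < 0.77 := by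
  rw [Real.tanh_eq_sinh_div_cosh, div_lt_iff₀ (Real.cosh_pos 1), Real.sinh_eq, Real.cosh_eq]
  have h1 : Real.exp 1 < 2.7182818286 := Real.exp_one_lt_d9
  have h2 : Real.exp (-1) * Real.exp 1 = 1 := by rw [← Real.exp_add]; norm_num
  have h4 : 0 < Real.exp 1 := Real.exp_pos _
  nlinarith

lemma tanh_one_pos : 0 < Real.tanh 1 := by
  rw [Real.tanh_eq_sinh_div_cosh]
  exact div_pos (Real.sinh_pos_iff.mpr one_pos) (Real.cosh_pos 1)

set_option maxHeartbeats 800000 in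
lemma tent_core {n : ℕ} {z u η : Cn n} (hzn : ‖z‖ < 1) (hun : ‖u‖ < 1) (hηn : ‖η‖ = 1)
    {t : ℝ} (ht : 0 < t)
    (hB : ‖1 - pInner z η‖ < t)
    (hρ : Real.sqrt (1 - (1 - ‖z‖ ^ 2) * (1 - ‖u‖ ^ 2) /
        ‖1 - pInner u z‖ ^ 2) < Real.tanh 1) :
    ‖1 - pInner u η‖ < 20 * t := by
  simp only [pInner_eq_inner'] at hB hρ ⊢
  set A : ℝ := ‖(1 : ℂ) - ⟪z, u⟫‖ with hA
  set B : ℝ := ‖(1 : ℂ) - ⟪η, z⟫‖ with hBdef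
  set s : ℝ := 1 - Real.tanh 1 ^ 2 with hs_def
  have hA0 : 0 < A := by
    have h1 : ‖⟪z, u⟫‖ ≤ ‖z‖ * ‖u‖ := norm_inner_le_norm z u
    have h2 : ‖(1 : ℂ)‖ - ‖⟪z, u⟫‖ ≤ A := norm_sub_norm_le _ _
    simp only [norm_one] at h2
    nlinarith [norm_nonneg z, norm_nonneg u]
  -- the pseudo-hyperbolic hypothesis
  have hq : s * A ^ 2 < (1 - ‖z‖ ^ 2) * (1 - ‖u‖ ^ 2) := by
    rw [Real.sqrt_lt' tanh_one_pos] at hρ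
    have h : s < (1 - ‖z‖ ^ 2) * (1 - ‖u‖ ^ 2) / A ^ 2 := by rw [hs_def]; linarith
    exact (lt_div_iff₀ (pow_pos hA0 2)).mp h
  have hs1 : 0.407 < s := by
    have h1 := tanh_one_lt
    have h2 := tanh_one_pos
    rw [hs_def]; nlinarith
  -- 1 - ‖u‖² ≤ 2A
  have h3 : 1 - ‖u‖ ^ 2 ≤ 2 * A := by
    have h1 : ‖⟪z, u⟫‖ ≤ ‖z‖ * ‖u‖ := norm_inner_le_norm z u
    have h2 : ‖(1 : ℂ)‖ - ‖⟪z, u⟫‖ ≤ A := norm_sub_norm_le _ _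
    simp only [norm_one] at h2
    nlinarith [norm_nonneg z, norm_nonneg u]
  -- 1 - ‖z‖² ≤ 2B
  have h2B : 1 - ‖z‖ ^ 2 ≤ 2 * B := by
    have h1 : ‖⟪η, z⟫‖ ≤ ‖η‖ * ‖z‖ := norm_inner_le_norm η z
    have h2 : ‖(1 : ℂ)‖ - ‖⟪η, z⟫‖ ≤ B := norm_sub_norm_le _ _
    rw [hηn, one_mul] at h1
    simp only [norm_one] at h2
    nlinarith [norm_nonneg z]
  -- s * A < 2 (1 - ‖z‖²)
  have hsA : s * A < 2 * (1 - ‖z‖ ^ 2) := by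
    have hz2 : 0 ≤ 1 - ‖z‖ ^ 2 := by nlinarith [norm_nonneg z]
    nlinarith [hq, h3, hA0]
  -- ‖z - u‖² ≤ 2A
  have hy2 : ‖z - u‖ ^ 2 ≤ 2 * A := by
    have h1 : ‖z - u‖ ^ 2 = ‖z‖ ^ 2 - 2 * RCLike.re ⟪z, u⟫ + ‖u‖ ^ 2 := norm_sub_sq z u
    have h2 : RCLike.re ((1 : ℂ) - ⟪z, u⟫) ≤ A := RCLike.re_le_norm _
    simp only [map_sub, RCLike.one_re] at h2
    nlinarith [norm_nonneg z, norm_nonneg u]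
  -- ‖z - η‖² ≤ 2B
  have hx2 : ‖z - η‖ ^ 2 ≤ 2 * B := by
    have h1 : ‖z - η‖ ^ 2 = ‖z‖ ^ 2 - 2 * RCLike.re ⟪z, η⟫ + ‖η‖ ^ 2 := norm_sub_sq z η
    have h2 : RCLike.re ((1 : ℂ) - ⟪η, z⟫) ≤ B := RCLike.re_le_norm _
    have h3 : RCLike.re ⟪z, η⟫ = RCLike.re ⟪η, z⟫ := by
      rw [← inner_conj_symm z η]; exact RCLike.conj_re _
    simp only [map_sub, RCLike.one_re] at h2
    rw [hηn] at h1
    nlinarith [norm_nonneg z]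
  -- triangle-type bound
  have hzz : ‖(1 : ℂ) - ⟪z, z⟫‖ = 1 - ‖z‖ ^ 2 := by
    rw [inner_self_eq_norm_sq_to_K, ← RCLike.ofReal_pow, ← RCLike.ofReal_one,
      ← RCLike.ofReal_sub, RCLike.norm_ofReal, abs_of_nonneg (by nlinarith [norm_nonneg z])]
  have hT : ‖(1 : ℂ) - ⟪η, u⟫‖ ≤ A + B + (1 - ‖z‖ ^ 2) + ‖z - η‖ * ‖z - u‖ := by
    have hid : (1 : ℂ) - ⟪η, u⟫ =
        (((1 - ⟪z, u⟫) + (1 - ⟪η, z⟫)) - (1 - ⟪z, z⟫)) - ⟪z - η, z - u⟫ := by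
      simp only [inner_sub_left, inner_sub_right]; ring
    have h4 : ‖((1 : ℂ) - ⟪z, u⟫) + (1 - ⟪η, z⟫) - (1 - ⟪z, z⟫)‖ ≤
        A + B + ‖(1 : ℂ) - ⟪z, z⟫‖ :=
      le_trans (norm_sub_le _ _) (add_le_add_left (norm_add_le _ _) _)
    calc ‖(1 : ℂ) - ⟪η, u⟫‖
        = ‖(((1 : ℂ) - ⟪z, u⟫) + (1 - ⟪η, z⟫) - (1 - ⟪z, z⟫)) - ⟪z - η, z - u⟫‖ := by
          rw [hid]
      _ ≤ ‖((1 : ℂ) - ⟪z, u⟫) + (1 - ⟪η, z⟫) - (1 - ⟪z, z⟫)‖ + ‖⟪z - η, z - u⟫‖ :=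
          norm_sub_le _ _
      _ ≤ (A + B + ‖(1 : ℂ) - ⟪z, z⟫‖) + ‖z - η‖ * ‖z - u‖ :=
          add_le_add h4 (norm_inner_le_norm _ _)
      _ = A + B + (1 - ‖z‖ ^ 2) + ‖z - η‖ * ‖z - u‖ := by rw [hzz]
  -- final assembly
  have hxy : ‖z - η‖ * ‖z - u‖ ≤ A / 3 + 3 * B := by
    nlinarith [sq_nonneg (‖z - u‖ - 3 * ‖z - η‖), hx2, hy2]
  have hAle : A < 10 * t := by
    nlinarith [mul_pos (sub_pos.mpr hs1) hA0, hsA, h2B, hB]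
  linarith [hT, h2B, hxy, hAle, hB]

/-- For `a ∈ 𝔹_n` with `|a| > 19/20` and `ã = (1−20(1−|a|))·a/|a|`, the
union of the Bergman balls `D(z,1)` over `z ∈ 𝒯_a` is contained in the tent `𝒯_ã`. -/
theorem bergman_balls_in_dilated_tent (n : ℕ) (hn : 1 ≤ n) (a : Cn n)
    (ha : a ∈ unitBall n) (ha' : 19 / 20 < ‖a‖) :
    ∀ atil : Cn n, atil = (1 - 20 * (1 - ‖a‖) : ℝ) • ((‖a‖ : ℂ)⁻¹ • a) →
      1 - ‖atil‖ = 20 * (1 - ‖a‖) ∧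
      ∀ z ∈ tent a, ∀ u ∈ unitBall n, pseudoDist z u < Real.tanh 1 →
        ‖1 - pInner u ((‖atil‖ : ℂ)⁻¹ • atil)‖ < 1 - ‖atil‖ := by
  intro atil hatil
  have haball : ‖a‖ < 1 := by simpa [unitBall, mem_ball_zero_iff] using ha
  have ht0 : 0 < 1 - ‖a‖ := by linarith
  have hapos : (0 : ℝ) < ‖a‖ := by linarith
  have ha0 : a ≠ 0 := fun h => by simp [h] at hapos
  have hc : (0 : ℝ) < 1 - 20 * (1 - ‖a‖) := by linarith
  have hηnorm : ‖(‖a‖ : ℂ)⁻¹ • a‖ = 1 := by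
    rw [norm_smul, norm_inv, Complex.norm_real, Real.norm_eq_abs, abs_of_pos hapos,
      inv_mul_cancel₀ (ne_of_gt hapos)]
  have hatilnorm : ‖atil‖ = 1 - 20 * (1 - ‖a‖) := by
    rw [hatil, norm_smul, hηnorm, Real.norm_eq_abs, abs_of_pos hc, mul_one]
  refine ⟨by rw [hatilnorm]; ring, ?_⟩
  have hdir : (‖atil‖ : ℂ)⁻¹ • atil = (‖a‖ : ℂ)⁻¹ • a := by
    have h1 : (1 - 20 * (1 - ‖a‖) : ℝ) • ((‖a‖ : ℂ)⁻¹ • a) =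
        ((1 - 20 * (1 - ‖a‖) : ℝ) : ℂ) • ((‖a‖ : ℂ)⁻¹ • a) := by norm_cast
    rw [hatilnorm, hatil, h1, smul_smul,
      inv_mul_cancel₀ (by exact_mod_cast ne_of_gt hc), one_smul]
  intro z hz u hu hρ
  rw [tent, if_neg ha0] at hz
  obtain ⟨hzball, hB⟩ := hz
  have hzn : ‖z‖ < 1 := by simpa [unitBall, mem_ball_zero_iff] using hzball
  have hun : ‖u‖ < 1 := by simpa [unitBall, mem_ball_zero_iff] using hu
  rw [hdir, hatilnorm]
  have h20 : (1 : ℝ) - (1 - 20 * (1 - ‖a‖)) = 20 * (1 - ‖a‖) := by ring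
  rw [h20]
  exact tent_core hzn hun hηnorm ht0 hB hρ

end
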